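/- Let (E,ℰ) be a measurable space and let (P_μ)_{μ∈𝒫(E)} be a nonlinear Markov chain whose two-step kernel Q satisfies conditions (C1) and (C2) with λ₂ = α₂. Then for all μ, ν ∈ 𝒫(E), writing p = ‖μ − ν‖_TV/2, one has ‖μQ_μ − νQ_ν‖_TV ≤ 2p(1 − λ₂ p). -/

import Mathlib

open MeasureTheory ProbabilityTheory

/-- Total variation distance `‖μ − ν‖_TV = 2 sup_{A ∈ ℰ} |μ(A) − ν(A)|`. -/
noncomputable def tvDist {E : Type*} [MeasurableSpace E] (μ ν : Measure E) : ℝ :=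
  2 * ⨆ A : {s : Set E // MeasurableSet s}, |(μ A).toReal - (ν A).toReal|

/-- One step of the nonlinear chain: `μ ↦ μ P_μ`, `(νP_μ)(B) = ∫ P_μ(x,B) ν(dx)`. -/
noncomputable def stepMeasure {E : Type*} [MeasurableSpace E]
    (P : Measure E → Kernel E E) (μ : Measure E) : Measure E :=
  μ.bind (fun x => P μ x)

/-- Two-step transition kernel `Q_μ(x,B) = ∫ P_μ(x,dy) P_{μP_μ}(y,B)`. -/
noncomputable def twoStepKernel {E : Type*} [MeasurableSpace E]
    (P : Measure E → Kernel E E) (μ : Measure E) (x : E) : Measure E :=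
  (P μ x).bind (fun y => P (stepMeasure P μ) y)

/-- Marginal distributions `μ_{n+1} = μ_n P_{μ_n}` of the nonlinear Markov chain. -/
noncomputable def marginal {E : Type*} [MeasurableSpace E]
    (P : Measure E → Kernel E E) (μ0 : Measure E) : ℕ → Measure E
  | 0 => μ0
  | n + 1 => stepMeasure P (marginal P μ0 n)

/-!
Split `μ = ξ + ρ` and `ν = η + ρ`, where `ρ` is the common part given by a Hahn decomposition;
then `ξ` and `η` both have mass `p = ‖μ - ν‖_TV / 2`. For a measurable `A`, the difference
`μQ_μ(A) - νQ_ν(A)` splits into a `ξ`-versus-`η` part, bounded by `(1 - α₂) p` through (C1), and a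
part over `ρ`, bounded by `λ₂ p (1 - p)` through (C2). The sum is
`p (1 - λ₂ p) - (α₂ - λ₂) p ≤ p (1 - λ₂ p)`.
-/

section TwoStepContraction

open Set

variable {E F : Type*} [MeasurableSpace E] [MeasurableSpace F]

section TotalVariation

lemma tvDist_eq_two_mul_iSup (μ ν : Measure E) :
    tvDist μ ν = 2 * ⨆ A : {s : Set E // MeasurableSet s}, |μ.real A - ν.real A| :=
  rfl

lemma tvDist_nonneg (μ ν : Measure E) : 0 ≤ tvDist μ ν :=
  mul_nonneg zero_le_two (Real.iSup_nonneg fun _ => abs_nonneg _)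

lemma abs_measureReal_sub_le_half_tvDist (μ ν : Measure E) [IsFiniteMeasure μ]
    [IsFiniteMeasure ν] {A : Set E} (hA : MeasurableSet A) :
    |μ.real A - ν.real A| ≤ tvDist μ ν / 2 := by
  have hbdd : BddAbove (range fun B : {s : Set E // MeasurableSet s} =>
      |μ.real B - ν.real B|) := by
    refine ⟨μ.real univ + ν.real univ, ?_⟩
    rintro _ ⟨B, rfl⟩
    have hμB : μ.real B ≤ μ.real univ := measureReal_mono (subset_univ _)
    have hνB : ν.real B ≤ ν.real univ := measureReal_mono (subset_univ _)
    have : 0 ≤ μ.real B := measureReal_nonneg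
    have : 0 ≤ ν.real B := measureReal_nonneg
    exact abs_le.2 ⟨by linarith, by linarith⟩
  have := le_ciSup hbdd ⟨A, hA⟩
  rw [tvDist_eq_two_mul_iSup]
  linarith

lemma tvDist_le_of_forall_abs_measureReal_sub_le {μ ν : Measure E} {b : ℝ}
    (h : ∀ A, MeasurableSet A → |μ.real A - ν.real A| ≤ b) : tvDist μ ν ≤ 2 * b := by
  have : Nonempty {s : Set E // MeasurableSet s} := ⟨⟨∅, .empty⟩⟩
  rw [tvDist_eq_two_mul_iSup]
  gcongr
  exact ciSup_le fun A => h A A.2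

end TotalVariation

section Decomposition

lemma exists_mutuallySingular_add_common (μ ν : Measure E) [IsFiniteMeasure μ]
    [IsFiniteMeasure ν] : ∃ ξ η ρ : Measure E, ξ ⟂ₘ η ∧ μ = ξ + ρ ∧ ν = η + ρ := by
  obtain ⟨S, hS, hνμ, hμν⟩ := hahn_decomposition μ ν
  have hleS : ν.restrict S ≤ μ.restrict S := Measure.le_iff.2 fun A hA => by
    simpa only [Measure.restrict_apply hA] using hνμ _ (hA.inter hS) inter_subset_right
  have hleSc : μ.restrict Sᶜ ≤ ν.restrict Sᶜ := Measure.le_iff.2 fun A hA => by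
    simpa only [Measure.restrict_apply hA] using hμν _ (hA.inter hS.compl) inter_subset_right
  refine ⟨μ.restrict S - ν.restrict S, ν.restrict Sᶜ - μ.restrict Sᶜ,
    ν.restrict S + μ.restrict Sᶜ, ⟨Sᶜ, hS.compl, ?_, ?_⟩, ?_, ?_⟩
  · refine le_antisymm ((Measure.le_iff'.1 Measure.sub_le Sᶜ).trans ?_) zero_le
    simp [Measure.restrict_apply hS.compl]
  · refine le_antisymm ((Measure.le_iff'.1 Measure.sub_le Sᶜᶜ).trans ?_) zero_le
    simp [Measure.restrict_apply hS]
  · rw [← add_assoc, Measure.sub_add_cancel_of_le hleS, Measure.restrict_add_restrict_compl hS]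
  · rw [add_comm (ν.restrict S), ← add_assoc, Measure.sub_add_cancel_of_le hleSc, add_comm,
      Measure.restrict_add_restrict_compl hS]

lemma exists_eq_add_measureReal_univ_eq_half_tvDist (μ ν : Measure E) [IsProbabilityMeasure μ]
    [IsProbabilityMeasure ν] :
    ∃ ξ η ρ : Measure E, IsFiniteMeasure ξ ∧ IsFiniteMeasure η ∧ IsFiniteMeasure ρ ∧
      μ = ξ + ρ ∧ ν = η + ρ ∧
      ξ.real univ = tvDist μ ν / 2 ∧ η.real univ = tvDist μ ν / 2 := by
  obtain ⟨ξ, η, ρ, ⟨S, hS, hξ, hη⟩, hμ, hν⟩ := exists_mutuallySingular_add_common μ ν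
  have : IsFiniteMeasure ξ := isFiniteMeasure_of_le μ (hμ ▸ Measure.le_add_right le_rfl)
  have : IsFiniteMeasure η := isFiniteMeasure_of_le ν (hν ▸ Measure.le_add_right le_rfl)
  have : IsFiniteMeasure ρ := isFiniteMeasure_of_le μ (hμ ▸ Measure.le_add_left le_rfl)
  have hμA : ∀ A, μ.real A = ξ.real A + ρ.real A := fun A => by rw [hμ, measureReal_add_apply]
  have hνA : ∀ A, ν.real A = η.real A + ρ.real A := fun A => by rw [hν, measureReal_add_apply]
  have hηq : η.real univ = ξ.real univ := by
    have h1 := hμA univ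
    have h2 := hνA univ
    simp only [probReal_univ] at h1 h2
    linarith
  have hξS : ξ.real Sᶜ = ξ.real univ := by
    rw [← measureReal_add_measureReal_compl hS, measureReal_def ξ S, hξ]
    simp
  have hηS : η.real Sᶜ = 0 := by simp [measureReal_def, hη]
  have hupper : tvDist μ ν ≤ 2 * ξ.real univ := by
    refine tvDist_le_of_forall_abs_measureReal_sub_le fun A _ => ?_
    have : ξ.real A ≤ ξ.real univ := measureReal_mono (subset_univ _)
    have : η.real A ≤ η.real univ := measureReal_mono (subset_univ _)
    have : 0 ≤ ξ.real A := measureReal_nonneg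
    have : 0 ≤ η.real A := measureReal_nonneg
    rw [hμA, hνA]
    exact abs_le.2 ⟨by linarith, by linarith⟩
  have hlower : ξ.real univ ≤ tvDist μ ν / 2 := by
    have := abs_measureReal_sub_le_half_tvDist μ ν hS.compl
    rwa [hμA, hνA, hξS, hηS, add_sub_add_right_eq_sub, sub_zero,
      abs_of_nonneg measureReal_nonneg] at this
  refine ⟨ξ, η, ρ, ‹_›, ‹_›, ‹_›, hμ, hν, by linarith, by linarith⟩

end Decomposition

section Coupling

lemma integrable_of_abs_sub_le {m : Measure E} [IsFiniteMeasure m] {f : E → ℝ}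
    (hf : Measurable f) {c a : ℝ} (h : ∀ x, |f x - c| ≤ a) : Integrable f m :=
  .of_bound hf.aestronglyMeasurable (|c| + a) (ae_of_all _ fun x => by
    rw [Real.norm_eq_abs]
    linarith [abs_sub_abs_le_abs_sub (f x) c, h x])

lemma integral_sub_integral_le_of_forall_sub_le [Nonempty E] {ξ η : Measure E}
    [IsFiniteMeasure ξ] [IsFiniteMeasure η] (hmass : ξ.real univ = η.real univ)
    {f g : E → ℝ} (hf : Integrable f ξ) (hg : Integrable g η) {c : ℝ}
    (hfg : ∀ x y, f x - g y ≤ c) :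
    ∫ x, f x ∂ξ - ∫ y, g y ∂η ≤ c * η.real univ := by
  obtain ⟨x₀⟩ := ‹Nonempty E›
  have hbdd : BddBelow (range g) := ⟨f x₀ - c, by
    rintro _ ⟨y, rfl⟩
    linarith [hfg x₀ y]⟩
  have hf_le : ∀ x, f x ≤ (⨅ y, g y) + c := fun x => by
    have := le_ciInf fun y => (sub_le_comm.1 (hfg x y))
    linarith
  have hupper : ∫ x, f x ∂ξ ≤ ((⨅ y, g y) + c) * η.real univ := by
    calc ∫ x, f x ∂ξ ≤ ∫ _, (⨅ y, g y) + c ∂ξ := integral_mono hf (integrable_const _) hf_le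
      _ = _ := by rw [integral_const, smul_eq_mul, hmass, mul_comm]
  have hlower : (⨅ y, g y) * η.real univ ≤ ∫ y, g y ∂η := by
    calc (⨅ y, g y) * η.real univ = ∫ _, ⨅ y, g y ∂η := by
          rw [integral_const, smul_eq_mul, mul_comm]
      _ ≤ ∫ y, g y ∂η := integral_mono (integrable_const _) hg (ciInf_le hbdd)
  linarith

lemma abs_integral_sub_integral_le_of_forall_abs_sub_le [Nonempty E] {ξ η : Measure E}
    [IsFiniteMeasure ξ] [IsFiniteMeasure η] (hmass : ξ.real univ = η.real univ)
    {f g : E → ℝ} (hf : Integrable f ξ) (hg : Integrable g η) {c : ℝ}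
    (hfg : ∀ x y, |f x - g y| ≤ c) :
    |∫ x, f x ∂ξ - ∫ y, g y ∂η| ≤ c * η.real univ := by
  have h₁ := integral_sub_integral_le_of_forall_sub_le hmass hf hg fun x y =>
    (abs_le.1 (hfg x y)).2
  have h₂ := integral_sub_integral_le_of_forall_sub_le hmass.symm hg hf fun y x => by
    linarith [(abs_le.1 (hfg x y)).1]
  rw [hmass] at h₂
  exact abs_le.2 ⟨by linarith, h₁⟩

/-- Coupling inequality: off the common part of `μ` and `ν` only the global oscillation bound
`a` is available, on it the diagonal bound `b`. -/
lemma abs_integral_sub_integral_le_of_isProbabilityMeasure (μ ν : Measure E)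
    [IsProbabilityMeasure μ] [IsProbabilityMeasure ν] {f g : E → ℝ} (hf : Measurable f)
    (hg : Measurable g) {a b : ℝ} (hfg : ∀ x y, |f x - g y| ≤ a) (hdiag : ∀ x, |f x - g x| ≤ b) :
    |∫ x, f x ∂μ - ∫ x, g x ∂ν| ≤ a * (tvDist μ ν / 2) + b * (1 - tvDist μ ν / 2) := by
  obtain ⟨x₀⟩ := nonempty_of_isProbabilityMeasure μ
  have : Nonempty E := ⟨x₀⟩
  obtain ⟨ξ, η, ρ, _, _, _, hμ, hν, hξ, hη⟩ := exists_eq_add_measureReal_univ_eq_half_tvDist μ ν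
  have hf_int (m : Measure E) [IsFiniteMeasure m] : Integrable f m :=
    integrable_of_abs_sub_le hf fun x => hfg x x₀
  have hg_int (m : Measure E) [IsFiniteMeasure m] : Integrable g m :=
    integrable_of_abs_sub_le hg fun y => (abs_sub_comm _ _).trans_le (hfg x₀ y)
  have hρ : ρ.real univ = 1 - tvDist μ ν / 2 := by
    have h := probReal_univ (μ := μ)
    rw [hμ, measureReal_add_apply] at h
    linarith
  have hsingular : |∫ x, f x ∂ξ - ∫ y, g y ∂η| ≤ a * (tvDist μ ν / 2) := by
    rw [← hη]
    exact abs_integral_sub_integral_le_of_forall_abs_sub_le (hξ.trans hη.symm) (hf_int ξ)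
      (hg_int η) hfg
  have hcommon : |∫ x, f x ∂ρ - ∫ x, g x ∂ρ| ≤ b * (1 - tvDist μ ν / 2) := by
    rw [← integral_sub (hf_int ρ) (hg_int ρ), ← hρ]
    exact norm_integral_le_of_norm_le_const (f := fun x => f x - g x) (ae_of_all _ hdiag)
  calc |∫ x, f x ∂μ - ∫ x, g x ∂ν|
        = |(∫ x, f x ∂ξ - ∫ y, g y ∂η) + (∫ x, f x ∂ρ - ∫ x, g x ∂ρ)| := by
          rw [hμ, hν, integral_add_measure (hf_int ξ) (hf_int ρ),
            integral_add_measure (hg_int η) (hg_int ρ)]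
          ring_nf
    _ ≤ _ := (abs_add_le _ _).trans (add_le_add hsingular hcommon)

end Coupling

section Kernel

lemma measureReal_bind_kernel (κ : Kernel E F) [IsFiniteKernel κ] (μ : Measure E) {A : Set F}
    (hA : MeasurableSet A) : (μ.bind κ).real A = ∫ x, (κ x).real A ∂μ := by
  rw [measureReal_def, Measure.bind_apply hA κ.measurable.aemeasurable,
    ← integral_toReal (κ.measurable_coe hA).aemeasurable
      (ae_of_all _ fun x => measure_lt_top (κ x) A)]
  rfl

lemma tvDist_bind_le (κ κ' : Kernel E F) [IsMarkovKernel κ] [IsMarkovKernel κ'] (μ ν : Measure E)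
    [IsProbabilityMeasure μ] [IsProbabilityMeasure ν] {a b : ℝ}
    (hglobal : ∀ x y, tvDist (κ x) (κ' y) ≤ 2 * a) (hdiag : ∀ x, tvDist (κ x) (κ' x) ≤ 2 * b) :
    tvDist (μ.bind κ) (ν.bind κ') ≤ 2 * (a * (tvDist μ ν / 2) + b * (1 - tvDist μ ν / 2)) := by
  refine tvDist_le_of_forall_abs_measureReal_sub_le fun A hA => ?_
  rw [measureReal_bind_kernel κ μ hA, measureReal_bind_kernel κ' ν hA]
  refine abs_integral_sub_integral_le_of_isProbabilityMeasure μ ν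
    (f := fun x => (κ x).real A) (g := fun x => (κ' x).real A)
    (κ.measurable_coe hA).ennreal_toReal (κ'.measurable_coe hA).ennreal_toReal
    (fun x y => ?_) (fun x => ?_)
  · linarith [abs_measureReal_sub_le_half_tvDist (κ x) (κ' y) hA, hglobal x y]
  · linarith [abs_measureReal_sub_le_half_tvDist (κ x) (κ' x) hA, hdiag x]

end Kernel

lemma twoStepKernel_eq_comp (P : Measure E → Kernel E E) (μ : Measure E) :
    twoStepKernel P μ = ⇑(P (stepMeasure P μ) ∘ₖ P μ) :=
  funext fun x => (Kernel.comp_apply _ _ x).symm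

end TwoStepContraction

theorem two_step_contraction_critical_general
    {E : Type*} [MeasurableSpace E]
    (P : Measure E → Kernel E E) (hP : ∀ μ, IsMarkovKernel (P μ))
    (α₂ lam₂ : ℝ) (hlam₂α : lam₂ ≤ α₂)
    (C1 : ∀ (μ ν : Measure E), IsProbabilityMeasure μ → IsProbabilityMeasure ν →
      ∀ x y : E, tvDist (twoStepKernel P μ x) (twoStepKernel P ν y) ≤ 2 * (1 - α₂))
    (C2 : ∀ (μ ν : Measure E), IsProbabilityMeasure μ → IsProbabilityMeasure ν →
      ∀ x : E, tvDist (twoStepKernel P μ x) (twoStepKernel P ν x) ≤ lam₂ * tvDist μ ν)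
    (μ ν : Measure E) (hμ : IsProbabilityMeasure μ) (hν : IsProbabilityMeasure ν) :
    tvDist (μ.bind (twoStepKernel P μ)) (ν.bind (twoStepKernel P ν)) ≤
      2 * (tvDist μ ν / 2) * (1 - lam₂ * (tvDist μ ν / 2)) := by
  have := hP μ; have := hP ν; have := hP (stepMeasure P μ); have := hP (stepMeasure P ν)
  have hp := tvDist_nonneg μ ν
  have hglobal := C1 μ ν hμ hν
  have hdiag := C2 μ ν hμ hν
  rw [twoStepKernel_eq_comp P μ, twoStepKernel_eq_comp P ν] at hglobal hdiag ⊢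
  calc _ ≤ 2 * ((1 - α₂) * (tvDist μ ν / 2) + lam₂ * (tvDist μ ν / 2) * (1 - tvDist μ ν / 2)) :=
        tvDist_bind_le _ _ μ ν hglobal fun x => (hdiag x).trans_eq (by ring)
    _ ≤ _ := by nlinarith

/-- under (C1) and (C2) with `λ₂ = α₂`, writing `p = ‖μ − ν‖_TV / 2`,
`‖μQ_μ − νQ_ν‖_TV ≤ 2p(1 − λ₂ p)`. -/
theorem two_step_contraction_critical
    {E : Type*} [MeasurableSpace E]
    (P : Measure E → Kernel E E) (hP : ∀ μ, IsMarkovKernel (P μ))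
    (α₂ lam₂ : ℝ) (hα₂0 : 0 < α₂) (hα₂1 : α₂ < 1)
    (hlam₂0 : 0 ≤ lam₂) (hlam₂α : lam₂ ≤ α₂) (hcrit : lam₂ = α₂)
    (C1 : ∀ (μ ν : Measure E), IsProbabilityMeasure μ → IsProbabilityMeasure ν →
      ∀ x y : E, tvDist (twoStepKernel P μ x) (twoStepKernel P ν y) ≤ 2 * (1 - α₂))
    (C2 : ∀ (μ ν : Measure E), IsProbabilityMeasure μ → IsProbabilityMeasure ν →
      ∀ x : E, tvDist (twoStepKernel P μ x) (twoStepKernel P ν x) ≤ lam₂ * tvDist μ ν)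
    (μ ν : Measure E) (hμ : IsProbabilityMeasure μ) (hν : IsProbabilityMeasure ν) :
    tvDist (μ.bind (twoStepKernel P μ)) (ν.bind (twoStepKernel P ν)) ≤
      2 * (tvDist μ ν / 2) * (1 - lam₂ * (tvDist μ ν / 2)) :=
  two_step_contraction_critical_general P hP α₂ lam₂ hlam₂α C1 C2 μ ν hμ hν
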